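/- For any pmf f on Z_+ with mean λ ∈ (0,∞), both D(S(f^{*n}) | f^{*n}) and D(f^{*n} | S(f^{*n})) are decreasing in n, i.e., for all n ≥ 1, D(S(f^{*(n+1)}) | f^{*(n+1)}) ≤ D(S(f^{*n}) | f^{*n}) and D(f^{*(n+1)} | S(f^{*(n+1)})) ≤ D(f^{*n} | S(f^{*n})). -/

import Mathlib

open scoped BigOperators ENNReal Classical
open Filter

/-- `f` is a probability mass function on `ℕ`. -/
def IsPmf (f : ℕ → ℝ) : Prop := (∀ i, 0 ≤ f i) ∧ HasSum f 1

/-- The mean of a pmf on `ℕ`. -/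
noncomputable def pmfMean (f : ℕ → ℝ) : ℝ := ∑' i : ℕ, (i : ℝ) * f i

/-- The Poisson pmf with parameter `lam`. -/
noncomputable def po (lam : ℝ) (i : ℕ) : ℝ := lam ^ i * Real.exp (-lam) / (Nat.factorial i)

/-- The `α`-thinning of a pmf `f`. -/
noncomputable def thin (α : ℝ) (f : ℕ → ℝ) (i : ℕ) : ℝ :=
  ∑' j : ℕ, f j * (Nat.choose j i : ℝ) * α ^ i * (1 - α) ^ (j - i)

/-- Convolution of two pmfs on `ℕ`. -/
def conv (f g : ℕ → ℝ) (i : ℕ) : ℝ := ∑ j ∈ Finset.range (i + 1), f j * g (i - j)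

/-- `n`-fold convolution power of a pmf; `convPow f 1 = f`. -/
def convPow (f : ℕ → ℝ) : ℕ → ℕ → ℝ
  | 0 => fun i => if i = 0 then 1 else 0
  | n + 1 => conv (convPow f n) f

/-- Shannon entropy of a pmf on `ℕ`. -/
noncomputable def ent (f : ℕ → ℝ) : ℝ := -∑' i : ℕ, f i * Real.log (f i)

/-- Relative entropy `D(f | g)`, valued in `ℝ≥0∞`; it is `∞` if the support of `f`
is not contained in that of `g` or if the defining series does not converge. -/
noncomputable def KL (f g : ℕ → ℝ) : ℝ≥0∞ :=
  if (∀ i, g i = 0 → f i = 0) ∧ Summable (fun i : ℕ => f i * Real.log (f i / g i)) then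
    ENNReal.ofReal (∑' i : ℕ, f i * Real.log (f i / g i))
  else ⊤

/-- `D(f) = D(f | po(λ))` where `λ` is the mean of `f`. -/
noncomputable def KLpo (f : ℕ → ℝ) : ℝ≥0∞ := KL f (po (pmfMean f))

/-- The size-biased pmf `S(f)`. -/
noncomputable def sizeBias (f : ℕ → ℝ) (i : ℕ) : ℝ := (i + 1 : ℝ) * f (i + 1) / pmfMean f

/-!
If `F` is the generating function of `f`, then `(i + 1) f_{i+1}` has generating function `F'`, and
`(F^{n+1})' = (n + 1) F^n F'` gives `S(f^{*(n+1)}) = f^{*n} * S(f)`, hence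
`S(f^{*(n+1)}) = S(f^{*n}) * f` for `n ≥ 1`. Both relative entropies at `n + 1` therefore compare
two sequences convolved with the same pmf `f`, and such a convolution cannot increase relative
entropy: pointwise this is the log-sum inequality.
-/

open PowerSeries Real

lemma mk_conv (a b : ℕ → ℝ) : mk (conv a b) = mk a * mk b := by
  ext i
  rw [coeff_mk, coeff_mul, Finset.Nat.sum_antidiagonal_eq_sum_range_succ_mk]
  simp only [conv, coeff_mk]

lemma mk_convPow (f : ℕ → ℝ) (n : ℕ) : mk (convPow f n) = mk f ^ n := by
  induction n with
  | zero => ext i; simp [convPow, coeff_one]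
  | succ n ih => rw [pow_succ, ← ih, ← mk_conv]; rfl

lemma conv_right_comm (a b c : ℕ → ℝ) : conv (conv a b) c = conv (conv a c) b := by
  have h : mk (conv (conv a b) c) = mk (conv (conv a c) b) := by
    simp only [mk_conv, mul_right_comm]
  funext i
  simpa using congrArg (coeff i) h

lemma conv_nonneg {a b : ℕ → ℝ} (ha : ∀ i, 0 ≤ a i) (hb : ∀ i, 0 ≤ b i) (i : ℕ) :
    0 ≤ conv a b i :=
  Finset.sum_nonneg fun j _ => mul_nonneg (ha j) (hb _)

lemma conv_div_const (a b : ℕ → ℝ) (c : ℝ) (i : ℕ) :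
    conv a (fun k => b k / c) i = conv a b i / c := by
  simp only [conv, Finset.sum_div, mul_div_assoc]

lemma hasSum_conv {a b : ℕ → ℝ} {A B : ℝ} (ha : HasSum a A) (hb : HasSum b B) :
    HasSum (conv a b) (A * B) := by
  have h := hasSum_sum_range_mul_of_summable_norm ha.summable.norm hb.summable.norm
  rwa [ha.tsum_eq, hb.tsum_eq] at h

lemma summable_conv {a b : ℕ → ℝ} (ha : Summable a) (hb : Summable b) : Summable (conv a b) :=
  (hasSum_conv ha.hasSum hb.hasSum).summable

lemma convPow_nonneg {f : ℕ → ℝ} (hf : ∀ i, 0 ≤ f i) (n i : ℕ) : 0 ≤ convPow f n i := by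
  induction n generalizing i with
  | zero => unfold convPow; split_ifs <;> norm_num
  | succ n ih => exact conv_nonneg ih hf i

lemma hasSum_convPow {f : ℕ → ℝ} (hf : HasSum f 1) (n : ℕ) : HasSum (convPow f n) 1 := by
  induction n with
  | zero => exact hasSum_ite_eq 0 1
  | succ n ih => exact mul_one (1 : ℝ) ▸ hasSum_conv ih hf

lemma PowerSeries.derivative_mk {R : Type*} [CommSemiring R] (g : ℕ → R) :
    d⁄dX R (mk g) = mk fun k => (k + 1) * g (k + 1) := by
  ext k
  rw [coeff_derivative, coeff_mk, coeff_mk, mul_comm]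

lemma succ_mul_convPow_succ (f : ℕ → ℝ) (n i : ℕ) :
    ((i : ℝ) + 1) * convPow f (n + 1) (i + 1) =
      (n + 1) * conv (convPow f n) (fun k => ((k : ℝ) + 1) * f (k + 1)) i := by
  have h := (d⁄dX ℝ).leibniz_pow (mk f) (n + 1)
  rw [← mk_convPow, derivative_mk, derivative_mk, add_tsub_cancel_right, ← mk_convPow,
    smul_eq_mul, ← mk_conv] at h
  have hi := congrArg (coeff i) h
  rw [map_nsmul, coeff_mk, coeff_mk, nsmul_eq_mul] at hi
  exact_mod_cast hi

lemma pmfMean_eq_tsum_succ (g : ℕ → ℝ) : pmfMean g = ∑' i : ℕ, ((i : ℝ) + 1) * g (i + 1) := by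
  rw [pmfMean, ← Nat.succ_injective.tsum_eq]
  · simp
  · intro i hi
    have hi0 : i ≠ 0 := by rintro rfl; simp at hi
    exact ⟨i - 1, by omega⟩

section SizeBias

variable {f : ℕ → ℝ}

lemma summable_succ_mul_succ (hmean : Summable fun i : ℕ => (i : ℝ) * f i) :
    Summable fun k : ℕ => ((k : ℝ) + 1) * f (k + 1) := by
  simpa using (summable_nat_add_iff 1).mpr hmean

lemma pmfMean_convPow_succ (hf : HasSum f 1) (hmean : Summable fun i : ℕ => (i : ℝ) * f i)
    (n : ℕ) : pmfMean (convPow f (n + 1)) = (n + 1) * pmfMean f := by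
  simp_rw [pmfMean_eq_tsum_succ, succ_mul_convPow_succ]
  rw [tsum_mul_left,
    (hasSum_conv (hasSum_convPow hf n) (summable_succ_mul_succ hmean).hasSum).tsum_eq, one_mul]

lemma sizeBias_convPow_succ (hf : HasSum f 1) (hmean : Summable fun i : ℕ => (i : ℝ) * f i)
    (n : ℕ) : sizeBias (convPow f (n + 1)) = conv (convPow f n) (sizeBias f) := by
  funext i
  have hn : (n : ℝ) + 1 ≠ 0 := by positivity
  rw [sizeBias, succ_mul_convPow_succ, pmfMean_convPow_succ hf hmean, mul_div_mul_left _ _ hn]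
  exact (conv_div_const _ _ _ i).symm

lemma sizeBias_convPow_succ_succ (hf : HasSum f 1) (hmean : Summable fun i : ℕ => (i : ℝ) * f i)
    (n : ℕ) : sizeBias (convPow f (n + 1 + 1)) = conv (sizeBias (convPow f (n + 1))) f := by
  rw [sizeBias_convPow_succ hf hmean, sizeBias_convPow_succ hf hmean]
  exact conv_right_comm _ _ _

lemma sizeBias_nonneg (hf : ∀ i, 0 ≤ f i) (i : ℕ) : 0 ≤ sizeBias f i :=
  div_nonneg (mul_nonneg (by positivity) (hf _))
    (tsum_nonneg fun j => mul_nonneg j.cast_nonneg (hf j))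

lemma summable_sizeBias (hmean : Summable fun i : ℕ => (i : ℝ) * f i) : Summable (sizeBias f) :=
  (summable_succ_mul_succ hmean).div_const _

end SizeBias

lemma mul_log_div_ge {c x y : ℝ} (hc : 0 < c) (hx : 0 ≤ x) (hy : 0 ≤ y) (hxy : y = 0 → x = 0) :
    x * log c + (x - c * y) ≤ x * log (x / y) := by
  rcases hx.eq_or_lt with rfl | hx
  · simpa using mul_nonneg hc.le hy
  have hy : 0 < y := hy.lt_of_ne fun h => hx.ne' (hxy h.symm)
  have h := log_le_sub_one_of_pos (show 0 < c / (x / y) by positivity)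
  rw [log_div hc.ne' (by positivity)] at h
  have h' : x * (c / (x / y) - 1) = c * y - x := by field_simp
  nlinarith [mul_le_mul_of_nonneg_left h hx.le]

lemma sum_mul_log_div_le {ι : Type*} (s : Finset ι) {a b : ι → ℝ} (ha : ∀ i ∈ s, 0 ≤ a i)
    (hb : ∀ i ∈ s, 0 ≤ b i) (hab : ∀ i ∈ s, b i = 0 → a i = 0) :
    (∑ i ∈ s, a i) * log ((∑ i ∈ s, a i) / ∑ i ∈ s, b i) ≤ ∑ i ∈ s, a i * log (a i / b i) := by
  set A := ∑ i ∈ s, a i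
  set B := ∑ i ∈ s, b i
  rcases (show 0 ≤ A from Finset.sum_nonneg ha).eq_or_lt with hA | hA
  · rw [← hA, zero_mul]
    refine Finset.sum_nonneg fun i hi => ?_
    rw [(Finset.sum_eq_zero_iff_of_nonneg ha).mp hA.symm i hi, zero_mul]
  have hB : 0 < B := by
    refine (show 0 ≤ B from Finset.sum_nonneg hb).lt_of_ne fun hB => hA.ne' ?_
    exact Finset.sum_eq_zero fun i hi =>
      hab i hi ((Finset.sum_eq_zero_iff_of_nonneg hb).mp hB.symm i hi)
  calc A * log (A / B) = ∑ i ∈ s, (a i * log (A / B) + (a i - A / B * b i)) := by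
        rw [Finset.sum_add_distrib, Finset.sum_sub_distrib, ← Finset.sum_mul, ← Finset.mul_sum]
        field_simp
        ring
    _ ≤ ∑ i ∈ s, a i * log (a i / b i) :=
        Finset.sum_le_sum fun i hi => mul_log_div_ge (by positivity) (ha i hi) (hb i hi) (hab i hi)

lemma summable_of_le_of_le {ι : Type*} {l t u : ι → ℝ} (hl : Summable l) (hu : Summable u)
    (hlt : ∀ i, l i ≤ t i) (htu : ∀ i, t i ≤ u i) : Summable t := by
  have h : Summable fun i => t i - l i :=
    (hu.sub hl).of_nonneg_of_le (fun i => sub_nonneg.2 (hlt i)) fun i => sub_le_sub_right (htu i) _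
  simpa using h.add hl

lemma mul_eq_zero_of_imp {a b x : ℝ} (hab : b = 0 → a = 0) (hb : b * x = 0) : a * x = 0 := by
  rcases mul_eq_zero.mp hb with hb | hx
  · rw [hab hb, zero_mul]
  · rw [hx, mul_zero]

section DataProcessing

variable {p q h : ℕ → ℝ}

lemma conv_eq_zero_of_imp (hq : ∀ i, 0 ≤ q i) (hh : ∀ i, 0 ≤ h i)
    (hpq : ∀ i, q i = 0 → p i = 0) (i : ℕ) (hi : conv q h i = 0) : conv p h i = 0 :=
  Finset.sum_eq_zero fun j hj => mul_eq_zero_of_imp (hpq j)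
    ((Finset.sum_eq_zero_iff_of_nonneg fun k _ => mul_nonneg (hq k) (hh _)).mp hi j hj)

lemma conv_mul_log_div_le (hp : ∀ i, 0 ≤ p i) (hq : ∀ i, 0 ≤ q i) (hh : ∀ i, 0 ≤ h i)
    (hpq : ∀ i, q i = 0 → p i = 0) (i : ℕ) :
    conv p h i * log (conv p h i / conv q h i) ≤ conv (fun j => p j * log (p j / q j)) h i := by
  refine (sum_mul_log_div_le (Finset.range (i + 1)) (fun j _ => mul_nonneg (hp j) (hh (i - j)))
    (fun j _ => mul_nonneg (hq j) (hh (i - j))) fun j _ => mul_eq_zero_of_imp (hpq j)).trans_eq ?_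
  refine Finset.sum_congr rfl fun j _ => ?_
  rcases (hh (i - j)).eq_or_lt with h0 | h0
  · simp [← h0]
  · rw [mul_div_mul_right _ _ h0.ne']
    ring

lemma KL_conv_le (hp : ∀ i, 0 ≤ p i) (hq : ∀ i, 0 ≤ q i) (hp' : Summable p) (hq' : Summable q)
    (hh : IsPmf h) : KL (conv p h) (conv q h) ≤ KL p q := by
  by_cases hKL : (∀ i, q i = 0 → p i = 0) ∧ Summable fun i => p i * log (p i / q i)
  swap
  · rw [show KL p q = ⊤ from if_neg hKL]
    exact le_top
  obtain ⟨hpq, hsum⟩ := hKL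
  have hsupp := conv_eq_zero_of_imp hq hh.1 hpq
  have hupper := conv_mul_log_div_le hp hq hh.1 hpq
  have hlower (i : ℕ) :
      conv p h i - conv q h i ≤ conv p h i * log (conv p h i / conv q h i) := by
    simpa using mul_log_div_ge one_pos (conv_nonneg hp hh.1 i) (conv_nonneg hq hh.1 i) (hsupp i)
  have hu := hasSum_conv hsum.hasSum hh.2
  rw [mul_one] at hu
  -- The integrand of `KL (conv p h) (conv q h)` is squeezed between two summable sequences.
  have ht := summable_of_le_of_le
    ((summable_conv hp' hh.2.summable).sub (summable_conv hq' hh.2.summable)) hu.summable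
    hlower hupper
  rw [KL, if_pos ⟨hsupp, ht⟩, KL, if_pos ⟨hpq, hsum⟩, ← hu.tsum_eq]
  exact ENNReal.ofReal_le_ofReal (ht.tsum_le_tsum hupper hu.summable)

end DataProcessing

theorem relEntropy_sizeBias_convPow_antitone_general (f : ℕ → ℝ) (hf : IsPmf f)
    (hmean : Summable (fun i : ℕ => (i : ℝ) * f i)) (n : ℕ) (hn : 1 ≤ n) :
    KL (sizeBias (convPow f (n + 1))) (convPow f (n + 1)) ≤
      KL (sizeBias (convPow f n)) (convPow f n) ∧
    KL (convPow f (n + 1)) (sizeBias (convPow f (n + 1))) ≤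
      KL (convPow f n) (sizeBias (convPow f n)) := by
  obtain ⟨m, rfl⟩ := Nat.exists_eq_add_of_le' hn
  have hS : Summable (sizeBias (convPow f (m + 1))) := by
    rw [sizeBias_convPow_succ hf.2 hmean]
    exact summable_conv (hasSum_convPow hf.2 m).summable (summable_sizeBias hmean)
  have hSnonneg := sizeBias_nonneg (convPow_nonneg hf.1 (m + 1))
  have hP := convPow_nonneg hf.1 (m + 1)
  have hP' := (hasSum_convPow hf.2 (m + 1)).summable
  rw [sizeBias_convPow_succ_succ hf.2 hmean]
  exact ⟨KL_conv_le hSnonneg hP hS hP' hf, KL_conv_le hP hSnonneg hP' hS hf⟩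

/-- For a pmf `f` on `ℕ` with mean `λ ∈ (0,∞)`, both `D(S(f^{*n}) | f^{*n})` and
`D(f^{*n} | S(f^{*n}))` are decreasing in `n ≥ 1`. -/
theorem relEntropy_sizeBias_convPow_antitone (f : ℕ → ℝ) (lam : ℝ) (hf : IsPmf f)
    (hmean : Summable (fun i : ℕ => (i : ℝ) * f i)) (hlam : pmfMean f = lam)
    (hpos : 0 < lam) (n : ℕ) (hn : 1 ≤ n) :
    KL (sizeBias (convPow f (n + 1))) (convPow f (n + 1)) ≤
      KL (sizeBias (convPow f n)) (convPow f n) ∧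
    KL (convPow f (n + 1)) (sizeBias (convPow f (n + 1))) ≤
      KL (convPow f n) (sizeBias (convPow f n)) :=
  relEntropy_sizeBias_convPow_antitone_general f hf hmean n hn
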